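/- Let n ≥ 2 and k be natural numbers. Suppose we are given k 'crossings', where crossing i (for i ∈ Fin k) consists of an over-strand label oᵢ ∈ Fin n, an under-strand label uᵢ ∈ Fin n with oᵢ ≠ uᵢ, and a crossing height tᵢ ∈ (0,1), and suppose the heights are pairwise distinct (tᵢ ≠ tⱼ for i ≠ j). Then there exist n functions f₀, …, f_{n-1} : [0,1] → [0,1], one for each strand label j ∈ Fin n, such that each fⱼ is continuous, strictly monotone increasing, satisfies fⱼ(0) = 0 and fⱼ(1) = 1, and such that for every crossing i there exist times s, s' ∈ [0,1] with s < s', f_{uᵢ}(s) = tᵢ, and f_{oᵢ}(s') = tᵢ (that is, the dancer on the under-strand of each crossing reaches the crossing height strictly before the dancer on the over-strand). -/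

import Mathlib

/-!
Let dancer `j` be at height `x + ε · ∑ᵢ σᵢⱼ · τᵢ(x)` at time `x`, where `τᵢ` is a tent of radius `r`
centred at the crossing height `tᵢ`, and `σᵢⱼ` is `1` if `j` is the under-strand of crossing `i`,
`-1` if it is the over-strand and `0` otherwise. If `r` is smaller than all distances between the
points `0`, `1`, `tᵢ`, the tents vanish at `0`, `1` and at the other crossing heights, so at time
`tᵢ` the under-dancer is already above `tᵢ` and the over-dancer still below it. The perturbation is
`ε k`-Lipschitz, so for `ε k < 1` every schedule stays strictly increasing.
-/

open Set NNReal

theorem LipschitzWith.finset_sum {X E ι : Type*} [PseudoEMetricSpace X] [SeminormedAddCommGroup E]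
    (s : Finset ι) {f : ι → X → E} {K : ι → ℝ≥0} (hf : ∀ i ∈ s, LipschitzWith (K i) (f i)) :
    LipschitzWith (∑ i ∈ s, K i) fun x => ∑ i ∈ s, f i x := by
  classical
  induction s using Finset.induction_on with
  | empty => simpa using LipschitzWith.const (0 : E)
  | insert a s ha ih =>
    simp_rw [Finset.sum_insert ha]
    exact (hf a (Finset.mem_insert_self a s)).add fun x y =>
      ih (fun i hi => hf i (Finset.mem_insert_of_mem hi)) x y

theorem strictMono_add_of_lipschitzWith {g : ℝ → ℝ} {K : ℝ≥0} (hK : K < 1)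
    (hg : LipschitzWith K g) : StrictMono fun x => x + g x := by
  intro x y hxy
  have hdist := hg.dist_le_mul x y
  rw [Real.dist_eq, Real.dist_eq, abs_sub_comm x y, abs_of_pos (sub_pos.2 hxy)] at hdist
  have hcontract : (K : ℝ) * (y - x) < y - x := mul_lt_of_lt_one_left (sub_pos.2 hxy) hK
  show x + g x < y + g y
  linarith [le_abs_self (g x - g y)]

theorem Set.Finite.exists_pos_forall_le_dist {X : Type*} [MetricSpace X] {S : Set X}
    (hS : S.Finite) : ∃ r > 0, ∀ x ∈ S, ∀ y ∈ S, x ≠ y → r ≤ dist x y := by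
  by_cases hnt : S.Nontrivial
  · exact ⟨S.infsep, hS.infsep_pos_iff_nontrivial.2 hnt, fun x hx y hy =>
      infsep_le_dist_of_mem hx hy⟩
  · exact ⟨1, one_pos, fun x hx y hy hxy => absurd ⟨x, hx, y, hy, hxy⟩ hnt⟩

section Tent

variable {X : Type*} [PseudoMetricSpace X]

def tent (a : X) (r : ℝ) (x : X) : ℝ := max 0 (r - dist x a)

theorem lipschitzWith_tent (a : X) (r : ℝ) : LipschitzWith 1 (tent a r) := by
  show LipschitzWith 1 fun x => max 0 (r - dist x a)
  simpa using ((LipschitzWith.const r).sub (LipschitzWith.dist_left a)).const_max 0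

theorem tent_self (a : X) {r : ℝ} (hr : 0 ≤ r) : tent a r a = r := by
  simp [tent, hr]

theorem tent_eq_zero {a x : X} {r : ℝ} (h : r ≤ dist x a) : tent a r x = 0 :=
  max_eq_left (sub_nonpos.2 h)

end Tent

section Crossings

variable {ι α X : Type*} [DecidableEq α] [PseudoMetricSpace X]
  (o u : ι → α) (t : ι → X) (r : ℝ)

def crossingSign (i : ι) (j : α) : ℝ := if u i = j then 1 else if o i = j then -1 else 0

variable {o u}

theorem crossingSign_under (i : ι) : crossingSign o u i (u i) = 1 := if_pos rfl

theorem crossingSign_over {i : ι} (h : o i ≠ u i) : crossingSign o u i (o i) = -1 := by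
  simp [crossingSign, h.symm]

theorem nnnorm_crossingSign_le (i : ι) (j : α) : ‖crossingSign o u i j‖₊ ≤ 1 := by
  unfold crossingSign; split_ifs <;> simp

variable (o u) [Fintype ι]

def crossingBumps (j : α) (x : X) : ℝ := ∑ i, crossingSign o u i j * tent (t i) r x

theorem lipschitzWith_crossingBumps (j : α) :
    LipschitzWith (Fintype.card ι) (crossingBumps o u t r j) := by
  have hterm (i : ι) : LipschitzWith 1 fun x => crossingSign o u i j * tent (t i) r x :=
    ((lipschitzWith_smul (crossingSign o u i j)).comp (lipschitzWith_tent (t i) r)).weaken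
      (by simpa using nnnorm_crossingSign_le i j)
  have hsum := LipschitzWith.finset_sum Finset.univ fun i _ => hterm i
  rw [Finset.sum_const, Finset.card_univ, nsmul_one] at hsum
  exact hsum

variable {o u t r}

theorem crossingBumps_eq_zero {x : X} (h : ∀ i, r ≤ dist x (t i)) (j : α) :
    crossingBumps o u t r j x = 0 :=
  Finset.sum_eq_zero fun i _ => by rw [tent_eq_zero (h i), mul_zero]

theorem crossingBumps_apply_crossing (hr : 0 ≤ r) {i : ι}
    (hsep : ∀ i', i' ≠ i → r ≤ dist (t i) (t i')) (j : α) :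
    crossingBumps o u t r j (t i) = crossingSign o u i j * r := by
  rw [crossingBumps, Finset.sum_eq_single_of_mem i (Finset.mem_univ i) fun i' _ hi' => by
    rw [tent_eq_zero (hsep i' hi'), mul_zero], tent_self _ hr]

end Crossings

section Schedule

variable {ι α : Type*} [Fintype ι] [DecidableEq α] (o u : ι → α) (t : ι → ℝ) (r ε : ℝ)

def danceSchedule (j : α) (x : ℝ) : ℝ := x + ε * crossingBumps o u t r j x

theorem continuous_danceSchedule (j : α) : Continuous (danceSchedule o u t r ε j) :=
  continuous_id.add (continuous_const.mul (lipschitzWith_crossingBumps o u t r j).continuous)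

variable {o u t r ε}

theorem danceSchedule_strictMono (hε : |ε| * Fintype.card ι < 1) (j : α) :
    StrictMono (danceSchedule o u t r ε j) :=
  strictMono_add_of_lipschitzWith (by rwa [← NNReal.coe_lt_coe, NNReal.coe_mul, coe_nnnorm])
    ((lipschitzWith_smul ε).comp (lipschitzWith_crossingBumps o u t r j))

theorem danceSchedule_eq_self {x : ℝ} (h : ∀ i, r ≤ dist x (t i)) (j : α) :
    danceSchedule o u t r ε j x = x := by
  rw [danceSchedule, crossingBumps_eq_zero h, mul_zero, add_zero]

theorem danceSchedule_apply_crossing (hr : 0 ≤ r) {i : ι}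
    (hsep : ∀ i', i' ≠ i → r ≤ dist (t i) (t i')) (j : α) :
    danceSchedule o u t r ε j (t i) = t i + ε * (crossingSign o u i j * r) := by
  rw [danceSchedule, crossingBumps_apply_crossing hr hsep]

end Schedule

theorem braid_dance_scheduling_general
    (n k : ℕ)
    (o u : Fin k → Fin n) (t : Fin k → ℝ)
    (hou : ∀ i, o i ≠ u i)
    (ht : ∀ i, t i ∈ Set.Ioo (0 : ℝ) 1)
    (htdist : ∀ i j, i ≠ j → t i ≠ t j) :
    ∃ f : Fin n → ℝ → ℝ,
      (∀ j, ContinuousOn (f j) (Set.Icc 0 1)) ∧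
      (∀ j, StrictMonoOn (f j) (Set.Icc 0 1)) ∧
      (∀ j, Set.MapsTo (f j) (Set.Icc 0 1) (Set.Icc 0 1)) ∧
      (∀ j, f j 0 = 0) ∧
      (∀ j, f j 1 = 1) ∧
      (∀ i, ∃ s s' : ℝ, s ∈ Set.Icc (0 : ℝ) 1 ∧ s' ∈ Set.Icc (0 : ℝ) 1 ∧
        s < s' ∧ f (u i) s = t i ∧ f (o i) s' = t i) := by
  obtain ⟨r, hr, hsep⟩ :=
    ((toFinite ({0, 1} : Set ℝ)).union (finite_range t)).exists_pos_forall_le_dist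
  set ε : ℝ := 1 / (k + 1)
  have hε : |ε| * Fintype.card (Fin k) < 1 := by
    rw [abs_of_pos (by positivity), Fintype.card_fin, one_div_mul_eq_div,
      div_lt_one (by positivity)]
    exact lt_add_one _
  have hmono : ∀ j, StrictMono (danceSchedule o u t r ε j) := danceSchedule_strictMono hε
  have hcont := continuous_danceSchedule o u t r ε
  have h0 (j : Fin n) : danceSchedule o u t r ε j 0 = 0 :=
    danceSchedule_eq_self (fun i => hsep _ (by simp) _ (by simp) (ht i).1.ne) j
  have h1 (j : Fin n) : danceSchedule o u t r ε j 1 = 1 :=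
    danceSchedule_eq_self (fun i => hsep _ (by simp) _ (by simp) (ht i).2.ne') j
  refine ⟨danceSchedule o u t r ε, fun j => (hcont j).continuousOn,
    fun j => (hmono j).strictMonoOn _,
    fun j => by simpa [h0, h1] using (hmono j).monotone.mapsTo_Icc (a := 0) (b := 1), h0, h1,
    fun i => ?_⟩
  have hcross := danceSchedule_apply_crossing (ε := ε) (o := o) (u := u) hr.le
    (fun i' hi' => hsep _ (by simp) _ (by simp) (htdist i i' hi'.symm))
  have hhit (j : Fin n) : ∃ s ∈ Icc (0 : ℝ) 1, danceSchedule o u t r ε j s = t i :=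
    intermediate_value_Icc zero_le_one (hcont j).continuousOn (by
      rw [h0, h1]; exact Ioo_subset_Icc_self (ht i))
  obtain ⟨s, hs, hfs⟩ := hhit (u i)
  obtain ⟨s', hs', hfs'⟩ := hhit (o i)
  have hpush : 0 < ε * r := by positivity
  have hs_lt : s < t i := (hmono (u i)).lt_iff_lt.1 <| by
    rw [hfs, hcross, crossingSign_under]; linarith
  have hlt_s' : t i < s' := (hmono (o i)).lt_iff_lt.1 <| by
    rw [hfs', hcross, crossingSign_over (hou i)]; linarith
  exact ⟨s, s', hs, hs', hs_lt.trans hlt_s', hfs, hfs'⟩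

/-- Scheduling lemma for dancing a braid (underlying Theorem 3: danceability ≤ braid index).
Given `k` crossings on `n ≥ 2` strands, each crossing `i` having an over-strand `o i`,
a distinct under-strand `u i`, and a height `t i ∈ (0,1)`, with all heights pairwise
distinct, there exist continuous strictly increasing reparametrizations
`f j : [0,1] → [0,1]` with `f j 0 = 0`, `f j 1 = 1`, such that at every crossing the
under-strand dancer reaches the crossing height strictly before the over-strand dancer. -/
theorem braid_dance_scheduling
    (n k : ℕ) (hn : 2 ≤ n)
    (o u : Fin k → Fin n) (t : Fin k → ℝ)
    (hou : ∀ i, o i ≠ u i)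
    (ht : ∀ i, t i ∈ Set.Ioo (0 : ℝ) 1)
    (htdist : ∀ i j, i ≠ j → t i ≠ t j) :
    ∃ f : Fin n → ℝ → ℝ,
      (∀ j, ContinuousOn (f j) (Set.Icc 0 1)) ∧
      (∀ j, StrictMonoOn (f j) (Set.Icc 0 1)) ∧
      (∀ j, Set.MapsTo (f j) (Set.Icc 0 1) (Set.Icc 0 1)) ∧
      (∀ j, f j 0 = 0) ∧
      (∀ j, f j 1 = 1) ∧
      (∀ i, ∃ s s' : ℝ, s ∈ Set.Icc (0 : ℝ) 1 ∧ s' ∈ Set.Icc (0 : ℝ) 1 ∧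
        s < s' ∧ f (u i) s = t i ∧ f (o i) s' = t i) :=
  braid_dance_scheduling_general n k o u t hou ht htdist
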